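/- arXiv:1912.08279 — 3 statements merged into one kernel-verified Lean document; each statement's English description precedes it below -/
import Mathlib

section
/- Let V and Q be real Hilbert spaces, let a : V × V → ℝ be a bounded bilinear form that is coercive (there is C_a > 0 with a(v,v) ≥ C_a‖v‖² for all v ∈ V), and let b : V × Q → ℝ be a bounded bilinear form satisfying the inf-sup condition: there is β > 0 such that for every ξ ∈ Q, sup over v ∈ V, v ≠ 0, of b(v,ξ)/‖v‖_V ≥ β‖ξ‖_Q. Define B(w,ξ;v,η) = a(w,v) − b(v,ξ) − b(w,η). Then there exist constants c > 0 and C > 0, depending only on C_a, β and the boundedness constants of a and b, such that for every pair (w,ξ) ∈ V × Q there exists v ∈ V with B(w,ξ;v,−ξ) ≥ c(‖w‖_V² + ‖ξ‖_Q²) and ‖v‖_V ≤ C(‖w‖_V + ‖ξ‖_Q). -/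
/-!
Test with `v = w - δ z`, where `z` has norm `‖ξ‖` and, by the inf-sup condition,
`b z ξ ≥ (β/2) ‖ξ‖²`. Then `B(w,ξ;v,-ξ) = a(w,w) - δ a(w,z) + δ b(z,ξ)`: coercivity controls `‖w‖²`,
the `z`-term controls `‖ξ‖²`, and for `δ` small relative to `‖a‖²` the cross term `δ a(w,z)` is
absorbed by Young's inequality.
-/

section

variable {V Q : Type*} [NormedAddCommGroup V] [NormedSpace ℝ V]
  [NormedAddCommGroup Q] [NormedSpace ℝ Q]

lemma exists_norm_eq_and_mul_sq_le_of_le_iSup (b : V →L[ℝ] Q →L[ℝ] ℝ) {β γ : ℝ}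
    (hγ : 0 ≤ γ) (hγβ : γ < β) {ξ : Q}
    (hinfsup : β * ‖ξ‖ ≤ ⨆ v : {v : V // v ≠ 0}, b v ξ / ‖(v : V)‖) :
    ∃ z : V, ‖z‖ = ‖ξ‖ ∧ γ * ‖ξ‖ ^ 2 ≤ b z ξ := by
  rcases eq_or_ne ξ 0 with rfl | hξ
  · exact ⟨0, by simp, by simp⟩
  have hξ_pos : 0 < ‖ξ‖ := norm_pos_iff.mpr hξ
  -- `Real.iSup_le` rather than `exists_lt_of_lt_ciSup`: the index type is empty when `V` is trivial.
  obtain ⟨⟨v, hv⟩, hlt⟩ : ∃ v : {v : V // v ≠ 0}, γ * ‖ξ‖ < b v ξ / ‖(v : V)‖ := by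
    by_contra! hle
    have := Real.iSup_le hle (by positivity)
    nlinarith
  have hv_pos : 0 < ‖v‖ := norm_pos_iff.mpr hv
  refine ⟨(‖ξ‖ / ‖v‖) • v, ?_, ?_⟩
  · rw [norm_smul, Real.norm_of_nonneg (by positivity), div_mul_cancel₀ _ hv_pos.ne']
  · rw [map_smul, smul_apply, smul_eq_mul]
    calc γ * ‖ξ‖ ^ 2 = ‖ξ‖ * (γ * ‖ξ‖) := by ring
      _ ≤ ‖ξ‖ * (b v ξ / ‖v‖) := by gcongr
      _ = ‖ξ‖ / ‖v‖ * b v ξ := by ring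

lemma saddle_form_sub_smul (a : V →L[ℝ] V →L[ℝ] ℝ) (b : V →L[ℝ] Q →L[ℝ] ℝ)
    (w z : V) (ξ : Q) (δ : ℝ) :
    a w (w - δ • z) - b (w - δ • z) ξ - b w (-ξ) = a w w - δ * a w z + δ * b z ξ := by
  simp only [map_sub, map_smul, map_neg, sub_apply, smul_apply, smul_eq_mul]
  ring

lemma half_coercive_add_le_saddle_form_sub_smul (a : V →L[ℝ] V →L[ℝ] ℝ)
    (b : V →L[ℝ] Q →L[ℝ] ℝ) {Ca γ δ : ℝ} (hCa : 0 < Ca) (hδ : 0 ≤ δ)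
    (hδa : δ * ‖a‖ ^ 2 ≤ Ca * γ) {w z : V} {ξ : Q} (hw : Ca * ‖w‖ ^ 2 ≤ a w w)
    (hz : ‖z‖ = ‖ξ‖) (hzξ : γ * ‖ξ‖ ^ 2 ≤ b z ξ) :
    Ca / 2 * ‖w‖ ^ 2 + δ * γ / 2 * ‖ξ‖ ^ 2 ≤ a w (w - δ • z) - b (w - δ • z) ξ - b w (-ξ) := by
  rw [saddle_form_sub_smul]
  have hawz : a w z ≤ ‖a‖ * ‖w‖ * ‖ξ‖ :=
    hz ▸ (le_abs_self _).trans (a.le_opNorm₂ w z)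
  have young : δ * (‖a‖ * ‖w‖ * ‖ξ‖) ≤ Ca / 2 * ‖w‖ ^ 2 + δ * γ / 2 * ‖ξ‖ ^ 2 := by
    have hsq := sq_nonneg (Ca * ‖w‖ - δ * ‖a‖ * ‖ξ‖)
    have hδ2 : δ * (δ * ‖a‖ ^ 2) * ‖ξ‖ ^ 2 ≤ δ * (Ca * γ) * ‖ξ‖ ^ 2 := by gcongr
    nlinarith
  nlinarith [mul_le_mul_of_nonneg_left hawz hδ, mul_le_mul_of_nonneg_left hzξ hδ]

end

theorem saddle_point_stability_general
    {V Q : Type*} [NormedAddCommGroup V] [InnerProductSpace ℝ V]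
    [NormedAddCommGroup Q] [InnerProductSpace ℝ Q]
    (a : V →L[ℝ] V →L[ℝ] ℝ) (b : V →L[ℝ] Q →L[ℝ] ℝ)
    (Ca : ℝ) (hCa : 0 < Ca) (hcoercive : ∀ v : V, Ca * ‖v‖ ^ 2 ≤ a v v)
    (β : ℝ) (hβ : 0 < β)
    (hinfsup : ∀ ξ : Q, β * ‖ξ‖ ≤ ⨆ v : {v : V // v ≠ 0}, b v ξ / ‖(v : V)‖) :
    ∃ c > (0 : ℝ), ∃ C > (0 : ℝ), ∀ (w : V) (ξ : Q), ∃ v : V,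
      c * (‖w‖ ^ 2 + ‖ξ‖ ^ 2) ≤ a w v - b v ξ - b w (-ξ) ∧
      ‖v‖ ≤ C * (‖w‖ + ‖ξ‖) := by
  set γ := β / 2
  set δ := Ca * γ / (‖a‖ ^ 2 + 1)
  have hγ : 0 < γ := by positivity
  have hγβ : γ < β := by simp only [γ]; linarith
  have hδ : 0 < δ := by positivity
  have hδa : δ * ‖a‖ ^ 2 ≤ Ca * γ := by
    rw [div_mul_eq_mul_div, div_le_iff₀ (by positivity)]
    nlinarith
  refine ⟨min (Ca / 2) (δ * γ / 2), by positivity, 1 + δ, by positivity, fun w ξ => ?_⟩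
  obtain ⟨z, hz, hzξ⟩ :=
    exists_norm_eq_and_mul_sq_le_of_le_iSup b hγ.le hγβ (hinfsup ξ)
  refine ⟨w - δ • z, ?_, ?_⟩
  · refine le_trans ?_ (half_coercive_add_le_saddle_form_sub_smul a b hCa hδ.le hδa
      (hcoercive w) hz hzξ)
    nlinarith [min_le_left (Ca / 2) (δ * γ / 2), min_le_right (Ca / 2) (δ * γ / 2),
      sq_nonneg ‖w‖, sq_nonneg ‖ξ‖]
  · calc ‖w - δ • z‖ ≤ ‖w‖ + δ * ‖ξ‖ := by
          simpa [norm_smul, hz, abs_of_pos hδ] using norm_sub_le w (δ • z)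
      _ ≤ (1 + δ) * (‖w‖ + ‖ξ‖) := by nlinarith [norm_nonneg w, norm_nonneg ξ]

/-- Stability of the saddle-point form `B(w,ξ;v,η) = a(w,v) − b(v,ξ) − b(w,η)` built from a
coercive bounded bilinear form `a` and an inf-sup stable bounded bilinear form `b`:
for every pair `(w,ξ)` there is a test function `v` of controlled norm with
`B(w,ξ;v,−ξ) ≥ c(‖w‖² + ‖ξ‖²)`. -/
theorem saddle_point_stability
    {V Q : Type*} [NormedAddCommGroup V] [InnerProductSpace ℝ V] [CompleteSpace V]
    [NormedAddCommGroup Q] [InnerProductSpace ℝ Q] [CompleteSpace Q]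
    (a : V →L[ℝ] V →L[ℝ] ℝ) (b : V →L[ℝ] Q →L[ℝ] ℝ)
    (Ca : ℝ) (hCa : 0 < Ca) (hcoercive : ∀ v : V, Ca * ‖v‖ ^ 2 ≤ a v v)
    (β : ℝ) (hβ : 0 < β)
    (hinfsup : ∀ ξ : Q, β * ‖ξ‖ ≤ ⨆ v : {v : V // v ≠ 0}, b v ξ / ‖(v : V)‖) :
    ∃ c > (0 : ℝ), ∃ C > (0 : ℝ), ∀ (w : V) (ξ : Q), ∃ v : V,
      c * (‖w‖ ^ 2 + ‖ξ‖ ^ 2) ≤ a w v - b v ξ - b w (-ξ) ∧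
      ‖v‖ ≤ C * (‖w‖ + ‖ξ‖) :=
  saddle_point_stability_general a b Ca hCa hcoercive β hβ hinfsup
end

section
/- Let V and Q be real Hilbert spaces, let a : V × V → ℝ be a bounded bilinear form that is coercive (there is C_a > 0 with a(v,v) ≥ C_a‖v‖² for all v ∈ V), let b : V × Q → ℝ be a bounded bilinear form, and let T : V → Q be a bounded linear map satisfying ‖Tv‖_Q² ≤ C a(v,v) for all v ∈ V, for some constant C > 0. For α ∈ (0, 1/C) define the stabilised form B_h(w,ξ;v,η) = a(w,v) − b(v,ξ) − b(w,η) − α⟨ξ + Tw, η + Tv⟩_Q. Then for every (w,ξ) ∈ V × Q one has B_h(w,ξ;w,−ξ) ≥ (1 − αC) a(w,w) + α‖ξ‖_Q² ≥ (1 − αC)C_a‖w‖_V² + α‖ξ‖_Q², and the test function v = w trivially satisfies ‖v‖_V ≤ ‖w‖_V. -/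
open scoped RealInnerProductSpace

/-- Stability of the stabilised form
`B_h(w,ξ;v,η) = a(w,v) − b(v,ξ) − b(w,η) − α⟨ξ + Tw, η + Tv⟩` with test pair `(v,η) = (w,−ξ)`:
if `a` is coercive with constant `C_a`, `‖Tv‖² ≤ C a(v,v)` and `0 < α < 1/C`, then
`B_h(w,ξ;w,−ξ) ≥ (1 − αC) a(w,w) + α‖ξ‖² ≥ (1 − αC) C_a ‖w‖² + α‖ξ‖²`,
and the test function `v = w` trivially satisfies `‖v‖ ≤ ‖w‖`. -/
theorem stabilised_stability
    {V Q : Type*} [NormedAddCommGroup V] [InnerProductSpace ℝ V] [CompleteSpace V]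
    [NormedAddCommGroup Q] [InnerProductSpace ℝ Q] [CompleteSpace Q]
    (a : V →L[ℝ] V →L[ℝ] ℝ) (b : V →L[ℝ] Q →L[ℝ] ℝ) (T : V →L[ℝ] Q)
    (Ca : ℝ) (hCa : 0 < Ca) (hcoercive : ∀ v : V, Ca * ‖v‖ ^ 2 ≤ a v v)
    (C : ℝ) (hC : 0 < C) (hT : ∀ v : V, ‖T v‖ ^ 2 ≤ C * a v v)
    (α : ℝ) (hα : α ∈ Set.Ioo 0 (1 / C)) :
    ∀ (w : V) (ξ : Q),
      ((1 - α * C) * a w w + α * ‖ξ‖ ^ 2 ≤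
        a w w - b w ξ - b w (-ξ) - α * ⟪ξ + T w, -ξ + T w⟫) ∧
      ((1 - α * C) * Ca * ‖w‖ ^ 2 + α * ‖ξ‖ ^ 2 ≤
        (1 - α * C) * a w w + α * ‖ξ‖ ^ 2) ∧
      ‖w‖ ≤ ‖w‖ := by
  intro w ξ
  obtain ⟨hα0, hα1⟩ := hα
  have hαC : α * C < 1 := by
    rw [lt_div_iff₀ hC] at hα1; linarith
  refine ⟨?_, ?_, le_refl _⟩
  · have hinner : ⟪ξ + T w, -ξ + T w⟫ = ‖T w‖ ^ 2 - ‖ξ‖ ^ 2 := by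
      rw [show (-ξ + T w : Q) = T w - ξ by abel, show (ξ + T w : Q) = T w + ξ by abel,
        inner_add_left, inner_sub_right, inner_sub_right, real_inner_self_eq_norm_sq,
        real_inner_self_eq_norm_sq, real_inner_comm ξ (T w)]
      ring
    have hb : b w (-ξ) = -(b w ξ) := by simp
    have hTw := hT w
    rw [hinner, hb]
    nlinarith [hα0.le]
  · have := hcoercive w
    nlinarith [hα0.le]
end

section
/- Let V be a real Hilbert space, (X, μ) a measure space, Q = L²(μ; ℝ), and Λ = {η ∈ Q : η ≥ 0 μ-a.e.}. Let a : V × V → ℝ be a bounded bilinear form, T, J : V → Q bounded linear maps, F : V → ℝ a bounded linear functional, and α > 0. Define B_h(w,ξ;v,η) = a(w,v) − ⟨Jv, ξ⟩_Q − ⟨Jw, η⟩_Q − α⟨ξ + Tw, η + Tv⟩_Q. Suppose (u, λ) ∈ V × Λ satisfies B_h(u,λ; v, η − λ) ≤ F(v) for all (v, η) ∈ V × Λ. Then λ = (−Tu − α⁻¹ Ju)⁺ μ-a.e., and u satisfies the Nitsche-type equation a(u,v) − ⟨Jv + αTv, λ⟩_Q − α⟨Tu, Tv⟩_Q = F(v)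 for every v ∈ V. -/
/-!
Testing the variational inequality with `v = 0` says that `λ ≥ 0` satisfies
`⟪λ - g, η - λ⟫ ≥ 0` for every `η ≥ 0`, with `g = -Tu - α⁻¹ Ju`: this is the variational
characterisation of the projection of `g` onto the cone of nonnegative functions, which is
`g⁺`, and solutions of such an inequality are unique. Testing with `η = λ` and `±v` turns the
inequality into the equation for `u`.
-/

open MeasureTheory
open scoped RealInnerProductSpace

theorem eq_of_forall_real_inner_sub_nonneg {E : Type*} [NormedAddCommGroup E]
    [InnerProductSpace ℝ E] {K : Set E} {g p q : E} (hp : p ∈ K) (hq : q ∈ K)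
    (hpK : ∀ w ∈ K, 0 ≤ ⟪p - g, w - p⟫) (hqK : ∀ w ∈ K, 0 ≤ ⟪q - g, w - q⟫) : p = q := by
  have hsum : ⟪p - g, q - p⟫ + ⟪q - g, p - q⟫ = -⟪p - q, p - q⟫ := by
    simp only [inner_sub_left, inner_sub_right, real_inner_comm p q]
    ring
  have : ⟪p - q, p - q⟫ = 0 :=
    le_antisymm (by linarith [hpK q hq, hqK p hp]) real_inner_self_nonneg
  exact sub_eq_zero.mp (inner_self_eq_zero.mp this)

namespace MeasureTheory.Lp

variable {X : Type*} [MeasurableSpace X] {μ : Measure X}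

theorem posPart_nonneg {p : ENNReal} (f : Lp ℝ p μ) : 0 ≤ posPart f := by
  rw [← coeFn_nonneg]
  filter_upwards [coeFn_posPart f] with x hx
  simp [hx]

theorem real_inner_posPart_sub_nonneg (f η : Lp ℝ 2 μ) (hη : 0 ≤ η) :
    0 ≤ ⟪posPart f - f, η - posPart f⟫ := by
  rw [L2.inner_def]
  refine integral_nonneg_of_ae ?_
  filter_upwards [coeFn_posPart f, coeFn_sub (posPart f) f, coeFn_sub η (posPart f),
    (coeFn_nonneg η).2 hη] with x hpos hsub₁ hsub₂ hηx
  rw [hsub₁, hsub₂, Pi.sub_apply, Pi.sub_apply, hpos, Real.inner_apply, Pi.zero_apply]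
  rcases le_total (f x) 0 with hf | hf
  · rw [max_eq_right hf]; exact mul_nonneg (by linarith) (by simpa using hηx)
  · rw [max_eq_left hf]; simp

end MeasureTheory.Lp

theorem stabilised_mixed_equiv_nitsche_general
    {V : Type*} [NormedAddCommGroup V] [InnerProductSpace ℝ V]
    {X : Type*} [MeasurableSpace X] (μ : Measure X)
    (a : V →L[ℝ] V →L[ℝ] ℝ) (T J : V →L[ℝ] Lp ℝ 2 μ) (F : V →L[ℝ] ℝ)
    (α : ℝ) (hα : 0 < α)
    (Bh : V → Lp ℝ 2 μ → V → Lp ℝ 2 μ → ℝ)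
    (hBh : ∀ (w : V) (ξ : Lp ℝ 2 μ) (v : V) (η : Lp ℝ 2 μ),
      Bh w ξ v η = a w v - ⟪J v, ξ⟫ - ⟪J w, η⟫ - α * ⟪ξ + T w, η + T v⟫)
    (u : V) (lam : Lp ℝ 2 μ) (hlam : 0 ≤ lam)
    (hVI : ∀ (v : V) (η : Lp ℝ 2 μ), 0 ≤ η → Bh u lam v (η - lam) ≤ F v) :
    lam = Lp.posPart (-(T u) - α⁻¹ • J u) ∧
    ∀ v : V, a u v - ⟪J v + α • T v, lam⟫ - α * ⟪T u, T v⟫ = F v := by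
  set g := -(T u) - α⁻¹ • J u
  have hproj : ∀ η : Lp ℝ 2 μ, 0 ≤ η → 0 ≤ ⟪lam - g, η - lam⟫ := by
    intro η hη
    have h := hVI 0 η hη
    simp only [hBh, map_zero, inner_zero_left, add_zero] at h
    have hscale : α * ⟪lam - g, η - lam⟫ = ⟪J u, η - lam⟫ + α * ⟪lam + T u, η - lam⟫ := by
      rw [show lam - g = (lam + T u) + α⁻¹ • J u by simp only [g]; abel,
        inner_add_left, real_inner_smul_left]
      field_simp
      ring
    exact nonneg_of_mul_nonneg_right (by linarith) hα
  refine ⟨eq_of_forall_real_inner_sub_nonneg (K := {η | 0 ≤ η}) hlam (Lp.posPart_nonneg g)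
    hproj (fun η hη ↦ Lp.real_inner_posPart_sub_nonneg g η hη), fun v ↦ ?_⟩
  have hv := hVI v lam hlam
  have hnegv := hVI (-v) lam hlam
  simp only [hBh, sub_self, inner_zero_right, zero_add, map_neg, inner_neg_left,
    inner_neg_right, inner_add_left] at hv hnegv
  rw [inner_add_left, real_inner_smul_left, real_inner_comm lam (T v)]
  linarith

/-- Equivalence of the stabilised mixed method with Nitsche's method: if `(u, λ)` with
`λ ≥ 0` a.e. satisfies `B_h(u,λ; v, η − λ) ≤ F(v)` for all `v` and all `η ≥ 0` a.e., where
`B_h(w,ξ;v,η) = a(w,v) − ⟨Jv, ξ⟩ − ⟨Jw, η⟩ − α⟨ξ + Tw, η + Tv⟩`, then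
`λ = (−Tu − α⁻¹ Ju)⁺` a.e. and `u` satisfies the Nitsche-type equation
`a(u,v) − ⟨Jv + αTv, λ⟩ − α⟨Tu, Tv⟩ = F(v)` for every `v`. -/
theorem stabilised_mixed_equiv_nitsche
    {V : Type*} [NormedAddCommGroup V] [InnerProductSpace ℝ V] [CompleteSpace V]
    {X : Type*} [MeasurableSpace X] (μ : Measure X)
    (a : V →L[ℝ] V →L[ℝ] ℝ) (T J : V →L[ℝ] Lp ℝ 2 μ) (F : V →L[ℝ] ℝ)
    (α : ℝ) (hα : 0 < α)
    (Bh : V → Lp ℝ 2 μ → V → Lp ℝ 2 μ → ℝ)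
    (hBh : ∀ (w : V) (ξ : Lp ℝ 2 μ) (v : V) (η : Lp ℝ 2 μ),
      Bh w ξ v η = a w v - ⟪J v, ξ⟫ - ⟪J w, η⟫ - α * ⟪ξ + T w, η + T v⟫)
    (u : V) (lam : Lp ℝ 2 μ) (hlam : 0 ≤ lam)
    (hVI : ∀ (v : V) (η : Lp ℝ 2 μ), 0 ≤ η → Bh u lam v (η - lam) ≤ F v) :
    lam = Lp.posPart (-(T u) - α⁻¹ • J u) ∧
    ∀ v : V, a u v - ⟪J v + α • T v, lam⟫ - α * ⟪T u, T v⟫ = F v :=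
  stabilised_mixed_equiv_nitsche_general μ a T J F α hα Bh hBh u lam hlam hVI
end
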